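/- Bijectivity of the Fourier-subspace and landscape correspondences. Let m > s ≥ 1. (i) If x and x' are subsets of 𝕋, each of cardinality s, and range Φ(m,x) = range Φ(m,x'), then x = x'. (ii) If U and V are s-dimensional Fourier subspaces of ℂ^m (i.e., U = range Φ(m,x) and V = range Φ(m,x') for some s-element sets x, x' ⊂ 𝕋) with q_U = q_V (where q_U is computed from any orthonormal basis of U, which is basis-independent), then U = V. Consequently there are bijections between s-element subsets of 𝕋, s-dimensional Fourier subspaces of ℂ^m, and their landscape functions. -/

import Mathlib

open scoped Real BigOperators Matrix
open Matrix

noncomputable section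

/-- Distance on the torus `ℝ/2πℤ` between (representatives of) two points. -/
def torusDist (u v : ℝ) : ℝ := ⨅ n : ℤ, |u - v + 2 * Real.pi * n|

/-- The steering vector `φ(t) = m^{-1/2} (e^{ikt})_{k ∈ I(m)}`. -/
def steer (m : ℕ) (t : ℝ) : Fin m → ℂ :=
  fun k => (Real.sqrt m : ℂ)⁻¹ *
    Complex.exp (Complex.I * (((((k : ℕ) : ℝ) - ((m : ℝ) - 1) / 2) * t : ℝ) : ℂ))

/-- The nonharmonic Fourier matrix `Φ(n, x) = (e^{i k x_j})_{k ∈ I(n), j}`. -/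
def fourierMatrix (n : ℕ) {s : ℕ} (x : Fin s → ℝ) : Matrix (Fin n) (Fin s) ℂ :=
  fun k j => Complex.exp (Complex.I * (((((k : ℕ) : ℝ) - ((n : ℝ) - 1) / 2) * x j : ℝ) : ℂ))

/-- Column span (range) of a matrix, as a subspace of Euclidean space. -/
def colSpan {d e : ℕ} (M : Matrix (Fin d) (Fin e) ℂ) :
    Submodule ℂ (EuclideanSpace ℂ (Fin d)) :=
  LinearMap.range (Matrix.toEuclideanLin M)

/-- The landscape function of a subspace `V ⊆ ℂ^m`:
`q_V(t) = 1 − ‖P_V φ(t)‖₂²` where `P_V` is the orthogonal projection onto `V`.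
For `V = range W` with `W` having orthonormal columns this agrees with
`q_W(t) = 1 − ‖W^*φ(t)‖₂²`, and it only depends on the subspace. -/
def landscapeSub {m : ℕ} (V : Submodule ℂ (EuclideanSpace ℂ (Fin m))) (t : ℝ) : ℝ :=
  1 - ‖(Submodule.orthogonalProjection V ((WithLp.equiv 2 (Fin m → ℂ)).symm (steer m t)) :
      EuclideanSpace ℂ (Fin m))‖ ^ 2

namespace FSLB

lemma torusDist_nonneg (u v : ℝ) : 0 ≤ torusDist u v :=
  Real.iInf_nonneg fun _ => abs_nonneg _

lemma torusDist_eq_zero_iff {u v : ℝ} :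
    torusDist u v = 0 ↔ ∃ n : ℤ, u - v = 2 * Real.pi * n := by
  constructor
  · intro h
    by_contra hc
    push_neg at hc
    set a := u - v with ha
    set b := toIocMod Real.two_pi_pos (-Real.pi) a with hb
    have hmem := toIocMod_mem_Ioc Real.two_pi_pos (-Real.pi) a
    rw [← hb] at hmem
    have hble : |b| ≤ Real.pi := by
      rw [abs_le]
      refine ⟨le_of_lt hmem.1, by linarith [hmem.2]⟩
    have hself := self_sub_toIocMod Real.two_pi_pos (-Real.pi) a
    rw [← hb] at hself
    set d := toIocDiv Real.two_pi_pos (-Real.pi) a with hd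
    have hab : a = b + (d : ℝ) * (2 * Real.pi) := by
      have : a - b = (d : ℝ) * (2 * Real.pi) := by
        rw [hself]; push_cast [zsmul_eq_mul]; ring
      linarith
    have hbne : b ≠ 0 := by
      intro h0
      exact hc d (by rw [hab, h0]; ring)
    have hlb : ∀ n : ℤ, |b| ≤ |a + 2 * Real.pi * n| := by
      intro n
      have ha2 : a + 2 * Real.pi * n = b + ((d + n : ℤ) : ℝ) * (2 * Real.pi) := by
        rw [hab]; push_cast; ring
      rcases eq_or_ne (d + n) 0 with h0 | h0
      · rw [ha2, h0]; simp
      · have h1 : (1 : ℝ) ≤ |((d + n : ℤ) : ℝ)| := by exact_mod_cast Int.one_le_abs h0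
        have h2 : 2 * Real.pi ≤ |((d + n : ℤ) : ℝ) * (2 * Real.pi)| := by
          rw [abs_mul, abs_of_pos Real.two_pi_pos]
          nlinarith [Real.two_pi_pos]
        have h3 : |((d + n : ℤ) : ℝ) * (2 * Real.pi)| ≤
            |b + ((d + n : ℤ) : ℝ) * (2 * Real.pi)| + |b| := by
          calc |((d + n : ℤ) : ℝ) * (2 * Real.pi)|
              = |(b + ((d + n : ℤ) : ℝ) * (2 * Real.pi)) + (-b)| := by ring_nf
          _ ≤ _ := by simpa using abs_add_le (b + ((d + n : ℤ) : ℝ) * (2 * Real.pi)) (-b)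
        rw [ha2]
        linarith [Real.pi_pos]
    have hpos : 0 < |b| := abs_pos.mpr hbne
    have : |b| ≤ torusDist u v := le_ciInf hlb
    rw [h] at this
    linarith
  · rintro ⟨n, hn⟩
    refine le_antisymm ?_ (torusDist_nonneg u v)
    have hbdd : BddBelow (Set.range fun n : ℤ => |u - v + 2 * Real.pi * n|) :=
      ⟨0, by rintro r ⟨k, rfl⟩; exact abs_nonneg _⟩
    have := ciInf_le hbdd (-n)
    calc torusDist u v ≤ |u - v + 2 * Real.pi * (-n : ℤ)| := this
    _ = 0 := by rw [hn]; push_cast; ring_nf; simp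

lemma torusDist_zero_iff_exp {u v : ℝ} :
    torusDist u v = 0 ↔ Complex.exp (Complex.I * u) = Complex.exp (Complex.I * v) := by
  rw [torusDist_eq_zero_iff, Complex.exp_eq_exp_iff_exists_int]
  constructor
  · rintro ⟨n, hn⟩
    refine ⟨n, ?_⟩
    have h := congrArg (fun r : ℝ => (r : ℂ)) hn
    push_cast at h
    linear_combination Complex.I * h
  · rintro ⟨n, hn⟩
    refine ⟨n, ?_⟩
    have h0 : Complex.I * ((u : ℂ) - v - 2 * (Real.pi : ℂ) * n) = 0 := by
      linear_combination hn
    rcases mul_eq_zero.mp h0 with h | h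
    · exact absurd h Complex.I_ne_zero
    · have : (u : ℂ) - v = 2 * (Real.pi : ℂ) * n := by linear_combination h
      exact_mod_cast this

open Polynomial in
lemma pow_vectors_indep {m s : ℕ} (hm : s < m) (z : Fin s → ℂ)
    (t : ℂ) (ht : ∀ j, t ≠ z j) (c : Fin s → ℂ)
    (h : ∀ k, k < m → t ^ k = ∑ j, c j * z j ^ k) : False := by
  classical
  set q : Polynomial ℂ := ∏ j, (X - C (z j)) with hq
  have hmon : ∀ j ∈ Finset.univ, (X - C (z j)).Monic := fun j _ => monic_X_sub_C _
  have hdeg : q.natDegree = s := by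
    rw [hq, natDegree_prod_of_monic _ _ hmon]
    simp
  have hdlt : q.natDegree < m := by omega
  have h2 : ∀ j, q.eval (z j) = 0 := by
    intro j
    rw [hq, eval_prod]
    exact Finset.prod_eq_zero (Finset.mem_univ j) (by simp)
  have h3 : q.eval t = 0 := by
    rw [eval_eq_sum_range' hdlt]
    calc ∑ i ∈ Finset.range m, q.coeff i * t ^ i
        = ∑ i ∈ Finset.range m, ∑ j, q.coeff i * (c j * z j ^ i) := by
          refine Finset.sum_congr rfl fun i hi => ?_
          rw [h i (Finset.mem_range.mp hi), Finset.mul_sum]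
      _ = ∑ j, c j * ∑ i ∈ Finset.range m, q.coeff i * z j ^ i := by
          rw [Finset.sum_comm]
          refine Finset.sum_congr rfl fun j _ => ?_
          rw [Finset.mul_sum]
          exact Finset.sum_congr rfl fun i _ => by ring
      _ = ∑ j, c j * q.eval (z j) := by
          refine Finset.sum_congr rfl fun j _ => ?_
          rw [← eval_eq_sum_range' hdlt]
      _ = 0 := by simp [h2]
  have h4 : q.eval t ≠ 0 := by
    rw [hq, eval_prod]
    refine Finset.prod_ne_zero_iff.mpr fun j _ => ?_
    simpa [sub_ne_zero] using ht j
  exact h4 h3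

lemma mem_colSpan_iff {d e : ℕ} (M : Matrix (Fin d) (Fin e) ℂ) (u : EuclideanSpace ℂ (Fin d)) :
    u ∈ colSpan M ↔ ∃ c : Fin e → ℂ, ∀ k, u k = ∑ j, M k j * c j := by
  constructor
  · rintro ⟨v, rfl⟩
    refine ⟨(WithLp.equiv 2 _) v, fun k => ?_⟩
    show (Matrix.toEuclideanLin M v) k = _
    rfl
  · rintro ⟨c, hc⟩
    refine ⟨(WithLp.equiv 2 _).symm c, ?_⟩
    rw [WithLp.equiv_symm_apply, Matrix.toEuclideanLin_apply_piLp_toLp]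
    ext k
    rw [PiLp.toLp_apply, hc k]
    simp [Matrix.mulVec, dotProduct]

/-- Entry of the Fourier matrix as a power of `exp(I x j)` times a nonzero constant. -/
lemma fourierMatrix_apply_eq {m s : ℕ} (x : Fin s → ℝ) (k : Fin m) (j : Fin s) :
    fourierMatrix m x k j =
      Complex.exp (Complex.I * (x j)) ^ (k : ℕ) *
        Complex.exp (-(Complex.I * (((m : ℂ) - 1) / 2) * (x j))) := by
  rw [fourierMatrix, ← Complex.exp_nat_mul, ← Complex.exp_add]
  congr 1
  push_cast
  ring

lemma steer_eq_fourier {m s : ℕ} (x : Fin s → ℝ) (j : Fin s) (k : Fin m) :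
    steer m (x j) k = (Real.sqrt m : ℂ)⁻¹ * fourierMatrix m x k j := rfl

lemma sqrtm_ne_zero {m : ℕ} (hm : 0 < m) : (Real.sqrt m : ℂ) ≠ 0 := by
  simp only [ne_eq, Complex.ofReal_eq_zero]
  positivity

lemma norm_steer {m : ℕ} (hm : 0 < m) (t : ℝ) :
    ‖(WithLp.equiv 2 (Fin m → ℂ)).symm (steer m t)‖ = 1 := by
  rw [EuclideanSpace.norm_eq]
  have hent : ∀ k : Fin m, ‖steer m t k‖ = (Real.sqrt m)⁻¹ := by
    intro k
    rw [steer, norm_mul]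
    rw [show Complex.I * (((((k : ℕ) : ℝ) - ((m : ℝ) - 1) / 2) * t : ℝ) : ℂ) =
      (((((k : ℕ) : ℝ) - ((m : ℝ) - 1) / 2) * t : ℝ) : ℂ) * Complex.I by ring]
    rw [Complex.norm_exp_ofReal_mul_I, mul_one,
      norm_inv, Complex.norm_real, Real.norm_eq_abs, abs_of_nonneg (Real.sqrt_nonneg _)]
  have : ∀ k : Fin m, ‖(WithLp.equiv 2 (Fin m → ℂ)).symm (steer m t) k‖ ^ 2
      = (Real.sqrt m)⁻¹ ^ 2 := by
    intro k
    rw [WithLp.equiv_symm_apply, PiLp.toLp_apply, hent k]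
  rw [Finset.sum_congr rfl fun k _ => this k, Finset.sum_const, Finset.card_univ,
    Fintype.card_fin, nsmul_eq_mul]
  have hms : Real.sqrt m ^ 2 = (m : ℝ) := Real.sq_sqrt (by positivity)
  rw [inv_pow, hms]
  rw [mul_inv_cancel₀ (by positivity), Real.sqrt_one]

lemma landscape_eq_zero_iff {m : ℕ} (hm : 0 < m)
    (U : Submodule ℂ (EuclideanSpace ℂ (Fin m))) (t : ℝ) :
    landscapeSub U t = 0 ↔ (WithLp.equiv 2 (Fin m → ℂ)).symm (steer m t) ∈ U := by
  set φ := (WithLp.equiv 2 (Fin m → ℂ)).symm (steer m t) with hφdef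
  have hφ : ‖φ‖ = 1 := norm_steer hm t
  have hpyth := Submodule.norm_sq_eq_add_norm_sq_projection φ U
  have hland : landscapeSub U t = ‖Submodule.orthogonalProjection Uᗮ φ‖ ^ 2 := by
    rw [landscapeSub, ← hφdef]
    rw [hφ] at hpyth
    have : (1 : ℝ) ^ 2 = 1 := one_pow 2
    simp only [Submodule.coe_norm] at hpyth ⊢
    linarith [hpyth]
  rw [hland]
  constructor
  · intro h
    have h0 : Submodule.orthogonalProjection Uᗮ φ = 0 := by
      have := pow_eq_zero_iff (n := 2) (by norm_num) |>.mp h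
      exact norm_eq_zero.mp this
    have := Submodule.orthogonalProjectionOnto_eq_zero_iff.mp h0
    rwa [Submodule.orthogonal_orthogonal] at this
  · intro h
    have h0 : Submodule.orthogonalProjection Uᗮ φ = 0 :=
      Submodule.orthogonalProjectionOnto_eq_zero_iff.mpr (by rwa [Submodule.orthogonal_orthogonal])
    rw [h0]
    simp

/-- The steering vector at a node lies in the column span of the Fourier matrix. -/
lemma steer_mem_colSpan {m s : ℕ} (hm : 0 < m) (x : Fin s → ℝ) (j : Fin s) :
    (WithLp.equiv 2 (Fin m → ℂ)).symm (steer m (x j)) ∈ colSpan (fourierMatrix m x) := by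
  classical
  refine (mem_colSpan_iff _ _).mpr ⟨fun i => if i = j then (Real.sqrt m : ℂ)⁻¹ else 0, fun k => ?_⟩
  rw [WithLp.equiv_symm_apply, PiLp.toLp_apply, steer_eq_fourier]
  rw [Finset.sum_congr rfl (fun i _ => by
    rw [mul_ite, mul_zero] : ∀ i ∈ Finset.univ, fourierMatrix m x k i *
      (if i = j then (Real.sqrt m : ℂ)⁻¹ else 0) =
      if i = j then fourierMatrix m x k i * (Real.sqrt m : ℂ)⁻¹ else 0)]
  rw [Finset.sum_ite_eq' Finset.univ j fun i => fourierMatrix m x k i * (Real.sqrt m : ℂ)⁻¹]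
  simp [mul_comm]

/-- If the steering vector at `t` lies in the span of a Fourier matrix with injective nodes,
then `t` coincides (mod 2π) with one of the nodes. -/
lemma exists_node {m s : ℕ} (hm : s < m) (x : Fin s → ℝ)
    (t : ℝ)
    (h : (WithLp.equiv 2 (Fin m → ℂ)).symm (steer m t) ∈ colSpan (fourierMatrix m x)) :
    ∃ j, Complex.exp (Complex.I * t) = Complex.exp (Complex.I * x j) := by
  by_contra hc
  push_neg at hc
  obtain ⟨c, hc'⟩ := (mem_colSpan_iff _ _).mp h
  have hm0 : 0 < m := lt_of_le_of_lt (Nat.zero_le s) hm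
  set w : ℂ := Complex.exp (Complex.I * t) with hw
  set g : ℝ → ℂ := fun r => Complex.exp (-(Complex.I * (((m : ℂ) - 1) / 2) * r)) with hg
  have hgne : ∀ r, g r ≠ 0 := fun r => Complex.exp_ne_zero _
  have ha : (Real.sqrt m : ℂ)⁻¹ * g t ≠ 0 :=
    mul_ne_zero (inv_ne_zero (sqrtm_ne_zero hm0)) (hgne t)
  refine pow_vectors_indep hm (fun j => Complex.exp (Complex.I * x j)) w hc
    (fun j => c j * g (x j) / ((Real.sqrt m : ℂ)⁻¹ * g t)) fun k hk => ?_
  have hkey := hc' ⟨k, hk⟩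
  rw [WithLp.equiv_symm_apply, PiLp.toLp_apply] at hkey
  have hsteer : steer m t (⟨k, hk⟩ : Fin m) = (Real.sqrt m : ℂ)⁻¹ * (w ^ k * g t) := by
    rw [steer, ← Complex.exp_nat_mul, ← Complex.exp_add]
    congr 2
    push_cast
    ring
  rw [hsteer] at hkey
  have hkey2 : w ^ k * ((Real.sqrt m : ℂ)⁻¹ * g t) =
      ∑ j, (Complex.exp (Complex.I * x j)) ^ k * (g (x j) * c j) := by
    rw [show w ^ k * ((Real.sqrt m : ℂ)⁻¹ * g t) = (Real.sqrt m : ℂ)⁻¹ * (w ^ k * g t) by ring,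
      hkey]
    refine Finset.sum_congr rfl fun j _ => ?_
    rw [fourierMatrix_apply_eq]
    ring
  have := (eq_div_iff ha).mpr hkey2
  rw [this, Finset.sum_div]
  refine Finset.sum_congr rfl fun j _ => ?_
  ring

lemma exp_injective_of_dist {s : ℕ} {x : Fin s → ℝ}
    (hx : ∀ j k : Fin s, j ≠ k → 0 < torusDist (x j) (x k)) :
    Function.Injective fun j => Complex.exp (Complex.I * x j) := by
  intro j k hjk
  by_contra hne
  have := hx j k hne
  rw [torusDist_zero_iff_exp.mpr hjk] at this
  exact lt_irrefl 0 this

end FSLB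

/-- **Bijectivity of the Fourier-subspace and landscape correspondences**
(Lemma `lem:bijection`). (i) Two `s`-element subsets of `𝕋` generating the same Fourier
subspace of `ℂ^m` coincide (as subsets of the torus). (ii) Two `s`-dimensional Fourier
subspaces with equal landscape functions coincide. -/
theorem fourier_subspace_landscape_bijections (m s : ℕ) (hs : 1 ≤ s) (hm : s < m) :
    -- (i)
    (∀ x x' : Fin s → ℝ,
      (∀ j k : Fin s, j ≠ k → 0 < torusDist (x j) (x k)) →
      (∀ j k : Fin s, j ≠ k → 0 < torusDist (x' j) (x' k)) →
      colSpan (fourierMatrix m x) = colSpan (fourierMatrix m x') →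
      ∃ σ : Equiv.Perm (Fin s), ∀ j, torusDist (x j) (x' (σ j)) = 0) ∧
    -- (ii)
    (∀ U V : Submodule ℂ (EuclideanSpace ℂ (Fin m)),
      (∃ x : Fin s → ℝ, (∀ j k : Fin s, j ≠ k → 0 < torusDist (x j) (x k)) ∧
        U = colSpan (fourierMatrix m x)) →
      (∃ x' : Fin s → ℝ, (∀ j k : Fin s, j ≠ k → 0 < torusDist (x' j) (x' k)) ∧
        V = colSpan (fourierMatrix m x')) →
      landscapeSub U = landscapeSub V → U = V) := by
  have hm0 : 0 < m := lt_of_le_of_lt (Nat.zero_le s) hm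
  constructor
  · -- (i)
    intro x x' hx hx' hspan
    have hz : Function.Injective fun j => Complex.exp (Complex.I * x j) :=
      FSLB.exp_injective_of_dist hx
    have hmem : ∀ j, (WithLp.equiv 2 (Fin m → ℂ)).symm (steer m (x j)) ∈
        colSpan (fourierMatrix m x') := by
      intro j
      rw [← hspan]
      exact FSLB.steer_mem_colSpan hm0 x j
    have hnode : ∀ j, ∃ k, Complex.exp (Complex.I * x j) = Complex.exp (Complex.I * x' k) :=
      fun j => FSLB.exists_node hm x' (x j) (hmem j)
    choose f hf using hnode
    have hfinj : Function.Injective f := by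
      intro j1 j2 hj
      have he : Complex.exp (Complex.I * x j1) = Complex.exp (Complex.I * x j2) := by
        rw [hf j1, hf j2, hj]
      exact hz he
    refine ⟨Equiv.ofBijective f (Finite.injective_iff_bijective.mp hfinj), fun j => ?_⟩
    exact FSLB.torusDist_zero_iff_exp.mpr (hf j)
  · -- (ii)
    have key : ∀ U V : Submodule ℂ (EuclideanSpace ℂ (Fin m)),
        (∃ x : Fin s → ℝ, (∀ j k : Fin s, j ≠ k → 0 < torusDist (x j) (x k)) ∧
          U = colSpan (fourierMatrix m x)) →
        (∃ x' : Fin s → ℝ, (∀ j k : Fin s, j ≠ k → 0 < torusDist (x' j) (x' k)) ∧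
          V = colSpan (fourierMatrix m x')) →
        landscapeSub U = landscapeSub V → V ≤ U := by
      rintro U V ⟨x, hx, rfl⟩ ⟨x', hx', rfl⟩ hq
      -- each steering vector at a node of x' lies in U
      have hcols : ∀ j, (WithLp.equiv 2 (Fin m → ℂ)).symm (steer m (x' j)) ∈
          colSpan (fourierMatrix m x) := by
        intro j
        rw [← FSLB.landscape_eq_zero_iff hm0]
        rw [congrFun hq (x' j)]
        exact (FSLB.landscape_eq_zero_iff hm0 _ _).mpr (FSLB.steer_mem_colSpan hm0 x' j)
      intro v hv
      obtain ⟨c, hc⟩ := (FSLB.mem_colSpan_iff _ _).mp hv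
      choose a ha using fun j => (FSLB.mem_colSpan_iff _ _).mp (hcols j)
      refine (FSLB.mem_colSpan_iff _ _).mpr
        ⟨fun i => ∑ j, (Real.sqrt m : ℂ) * c j * a j i, fun k => ?_⟩
      have hMc : ∀ j, fourierMatrix m x' k j = (Real.sqrt m : ℂ) * steer m (x' j) k := by
        intro j
        rw [FSLB.steer_eq_fourier, ← mul_assoc,
          mul_inv_cancel₀ (FSLB.sqrtm_ne_zero hm0), one_mul]
      have hstep : ∀ j, steer m (x' j) k = ∑ i, fourierMatrix m x k i * a j i := by
        intro j
        have := ha j k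
        rwa [WithLp.equiv_symm_apply, PiLp.toLp_apply] at this
      rw [hc k]
      calc ∑ j, fourierMatrix m x' k j * c j
          = ∑ j, (Real.sqrt m : ℂ) * c j * (∑ i, fourierMatrix m x k i * a j i) := by
            refine Finset.sum_congr rfl fun j _ => ?_
            rw [hMc j, hstep j]; ring
        _ = ∑ j, ∑ i, fourierMatrix m x k i * ((Real.sqrt m : ℂ) * c j * a j i) := by
            refine Finset.sum_congr rfl fun j _ => ?_
            rw [Finset.mul_sum]
            exact Finset.sum_congr rfl fun i _ => by ring
        _ = ∑ i, fourierMatrix m x k i * ∑ j, (Real.sqrt m : ℂ) * c j * a j i := by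
            rw [Finset.sum_comm]
            refine Finset.sum_congr rfl fun i _ => ?_
            rw [Finset.mul_sum]
    intro U V hU hV hq
    exact le_antisymm (key V U hV hU hq.symm) (key U V hU hV hq)

end
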